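/- arXiv:1811.02420 — 4 statements merged into one kernel-verified Lean document; each statement's English description precedes it below -/
import Mathlib

section
/- For natural numbers a, b ≥ 1, the list chromatic number of the complete bipartite graph K_{a,b} equals a + 1 if and only if b ≥ a^a. -/
open SimpleGraph

/-- A proper coloring of `G` from the list assignment `L`. -/
def IsProperListColoring {V : Type*} (G : SimpleGraph V) (L : V → Finset ℕ) (f : V → ℕ) : Prop :=
  (∀ v, f v ∈ L v) ∧ ∀ ⦃v w⦄, G.Adj v w → f v ≠ f w

/-- `G` is `k`-choosable: every `k`-assignment admits a proper coloring. -/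
def Choosable {V : Type*} (G : SimpleGraph V) (k : ℕ) : Prop :=
  ∀ L : V → Finset ℕ, (∀ v, (L v).card = k) → ∃ f, IsProperListColoring G L f

/-- The list chromatic number: the least `k` such that `G` is `k`-choosable. -/
noncomputable def listChromaticNumber {V : Type*} (G : SimpleGraph V) : ℕ :=
  sInf {k | Choosable G k}

/-- The list color function `P_ℓ(G,k)`: the minimum number of proper `L`-colorings
over all `k`-assignments `L`. -/
noncomputable def listColorFunction {V : Type*} (G : SimpleGraph V) (k : ℕ) : ℕ :=
  sInf {n | ∃ L : V → Finset ℕ, (∀ v, (L v).card = k) ∧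
    n = Nat.card {f : V → ℕ // IsProperListColoring G L f}}

/-- `G` is strong `k`-chromatic-choosable: `χ(G) = k` and every `(k-1)`-assignment
admitting no proper coloring is constant. -/
def StrongChromChoosable {V : Type*} (G : SimpleGraph V) (k : ℕ) : Prop :=
  G.chromaticNumber = k ∧
  ∀ L : V → Finset ℕ, (∀ v, (L v).card = k - 1) →
    (¬ ∃ f, IsProperListColoring G L f) → ∀ v w, L v = L w

/-! Choosing a colour `c i` from the list of each left vertex `i` extends to a proper colouring as
soon as no right list is contained in the image of `c`. With lists of size `a + 1` this always
holds. With lists of size `a`: if two left lists meet, a non-injective choice has an image of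
size less than `a`; if they are pairwise disjoint, the `a ^ a` choices have distinct images, and
fewer than `a ^ a` right lists cannot equal all of them. Conversely, with `a ^ a` right vertices,
left lists `{(i, t) | t}` and one right list `{(i, ψ i) | i}` for each `ψ : Fin a → Fin a` block
every choice. -/

open Finset Fintype Function

variable {V α β : Type*}

theorem Choosable.mono {G : SimpleGraph V} {k m : ℕ} (h : Choosable G k) (hkm : k ≤ m) :
    Choosable G m := by
  intro L hL
  choose L' hL'sub hL'card using fun v ↦ exists_subset_card_eq ((hL v).symm ▸ hkm)
  obtain ⟨f, hfL, hf⟩ := h L' hL'card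
  exact ⟨f, fun v ↦ hL'sub v (hfL v), hf⟩

theorem listChromaticNumber_eq_succ_iff {G : SimpleGraph V} {n : ℕ} (h : Choosable G (n + 1)) :
    listChromaticNumber G = n + 1 ↔ ¬ Choosable G n := by
  have hmem : Choosable G (listChromaticNumber G) :=
    Nat.sInf_mem (s := {k | Choosable G k}) ⟨n + 1, h⟩
  have hle : listChromaticNumber G ≤ n + 1 := Nat.sInf_le h
  refine ⟨fun heq hn ↦ ?_, fun hn ↦ le_antisymm hle ?_⟩
  · have : listChromaticNumber G ≤ n := Nat.sInf_le hn
    omega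
  by_contra! hlt
  exact hn (hmem.mono (Nat.le_of_lt_succ hlt))

theorem injOn_image_piFinset_of_pairwise_disjoint [Fintype α] [DecidableEq α]
    {t : α → Finset ℕ} (ht : Pairwise (Disjoint on t)) :
    Set.InjOn (fun c : α → ℕ ↦ univ.image c) (piFinset t) := by
  intro c hc c' hc' hcc'
  replace hcc' : univ.image c = univ.image c' := hcc'
  funext i
  obtain ⟨k, -, hk⟩ := mem_image.1 (hcc' ▸ mem_image_of_mem c (mem_univ i))
  obtain rfl : k = i := by
    by_contra hki
    exact disjoint_left.1 (ht hki) (mem_piFinset.1 hc' k) (hk ▸ mem_piFinset.1 hc i)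
  exact hk.symm

theorem exists_mem_piFinset_card_image_lt [Fintype α] [DecidableEq α] {t : α → Finset ℕ}
    (hne : ∀ i, (t i).Nonempty) (ht : ¬ Pairwise (Disjoint on t)) :
    ∃ c ∈ piFinset t, #(univ.image c) < card α := by
  obtain ⟨i, i', hii', hnd⟩ : ∃ i i', i ≠ i' ∧ ¬ Disjoint (t i) (t i') := by
    simpa [Pairwise] using ht
  obtain ⟨x, hxi, hxi'⟩ := not_disjoint_iff.1 hnd
  choose c₀ hc₀ using hne
  let c := update (update c₀ i x) i' x
  have hc : c ∈ piFinset t := by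
    refine mem_piFinset.2 fun k ↦ ?_
    by_cases hk' : k = i'
    · subst hk'; simpa [c] using hxi'
    by_cases hk : k = i
    · subst hk; simpa [c, hk'] using hxi
    simpa [c, hk, hk'] using hc₀ k
  refine ⟨c, hc, ?_⟩
  have hnotinj : ¬ Set.InjOn c (univ : Finset α) := fun hinj ↦
    hii' (hinj (mem_univ _) (mem_univ _) (by simp [c, hii']))
  exact (card_image_le.trans_eq card_univ).lt_of_ne (mt card_image_iff.1 (by simpa using hnotinj))

theorem exists_isProperListColoring_completeBipartiteGraph [Fintype α] {L : α ⊕ β → Finset ℕ}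
    {c : α → ℕ} (hc : ∀ i, c i ∈ L (.inl i)) (hcov : ∀ j, ¬ L (.inr j) ⊆ univ.image c) :
    ∃ f, IsProperListColoring (completeBipartiteGraph α β) L f := by
  choose g hgL hgc using fun j ↦ not_subset.1 (hcov j)
  refine ⟨Sum.elim c g, ?_, ?_⟩
  · rintro (i | j)
    exacts [hc i, hgL j]
  · rintro (i | j) (i' | j') hadj
    · simp at hadj
    · exact fun h ↦ hgc j' (mem_image.2 ⟨i, mem_univ i, h⟩)
    · exact fun h ↦ hgc j (mem_image.2 ⟨i', mem_univ i', h.symm⟩)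
    · simp at hadj

theorem choosable_completeBipartiteGraph_card_add_one [Fintype α] :
    Choosable (completeBipartiteGraph α β) (card α + 1) := by
  intro L hL
  choose c hc using fun i ↦ card_pos.1 ((hL (.inl i)).trans_gt (Nat.succ_pos (card α)))
  refine exists_isProperListColoring_completeBipartiteGraph hc fun j hj ↦ ?_
  have := (card_le_card hj).trans (card_image_le.trans_eq card_univ)
  rw [hL] at this
  omega

theorem choosable_completeBipartiteGraph_of_card_lt [Fintype α] [Fintype β]
    (h : card β < card α ^ card α) : Choosable (completeBipartiteGraph α β) (card α) := by
  classical
  intro L hL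
  set S := piFinset fun i ↦ L (.inl i)
  suffices ∃ c ∈ S, ∀ j, ¬ L (.inr j) ⊆ univ.image c by
    obtain ⟨c, hc, hcov⟩ := this
    exact exists_isProperListColoring_completeBipartiteGraph (mem_piFinset.1 hc) hcov
  by_cases hdisj : Pairwise (Disjoint on fun i ↦ L (.inl i))
  · have hlt : #(univ.image fun j ↦ L (.inr j)) < #(S.image fun c ↦ univ.image c) := calc
      _ ≤ card β := card_image_le.trans_eq card_univ
      _ < card α ^ card α := h
      _ = #S := by simp [S, card_piFinset, hL]
      _ = _ := (card_image_of_injOn (injOn_image_piFinset_of_pairwise_disjoint hdisj)).symm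
    obtain ⟨_, hs, hsR⟩ := exists_mem_notMem_of_card_lt_card hlt
    obtain ⟨c, hc, rfl⟩ := mem_image.1 hs
    refine ⟨c, hc, fun j hj ↦ hsR (mem_image.2 ⟨j, mem_univ j, ?_⟩)⟩
    exact eq_of_subset_of_card_le hj ((card_image_le.trans_eq card_univ).trans_eq (hL _).symm)
  · have hne i : (L (.inl i)).Nonempty := card_pos.1 ((hL _).trans_gt (card_pos_iff.2 ⟨i⟩))
    obtain ⟨c, hc, hlt⟩ := exists_mem_piFinset_card_image_lt hne hdisj
    refine ⟨c, hc, fun j hj ↦ ?_⟩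
    have := card_le_card hj
    rw [hL] at this
    omega

theorem not_choosable_completeBipartiteGraph_of_card_le [Fintype α] [Fintype β]
    (h : card α ^ card α ≤ card β) : ¬ Choosable (completeBipartiteGraph α β) (card α) := by
  classical
  intro hch
  let code : α × α ↪ ℕ := (equivFin (α × α)).toEmbedding.trans Fin.valEmbedding
  have : Nonempty (α → α) := ⟨id⟩
  obtain ⟨g, hg⟩ : ∃ g : β → α → α, Surjective g :=
    ⟨_, invFun_surjective (Embedding.nonempty_of_card_le (by simpa using h)).some.injective⟩
  let L : α ⊕ β → Finset ℕ := Sum.elim (fun i ↦ univ.image fun t ↦ code (i, t))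
    (fun j ↦ univ.image fun i ↦ code (i, g j i))
  have hL v : #(L v) = card α := by
    rcases v with i | j
    · exact (card_image_of_injective _ fun t t' htt' ↦ congrArg Prod.snd (code.injective htt'))
    · exact (card_image_of_injective _ fun i i' hii' ↦ congrArg Prod.fst (code.injective hii'))
  obtain ⟨f, hfL, hf⟩ := hch L hL
  choose ψ hψ using fun i ↦ (mem_image.1 (hfL (.inl i))).imp fun _ ↦ And.right
  obtain ⟨j, rfl⟩ := hg ψ
  obtain ⟨i, -, hi⟩ := mem_image.1 (hfL (.inr j))
  exact hf (by simp : (completeBipartiteGraph α β).Adj (.inl i) (.inr j)) ((hψ i).symm.trans hi)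

theorem listChromaticNumber_completeBipartiteGraph_eq_card_add_one_iff [Fintype α] [Fintype β] :
    listChromaticNumber (completeBipartiteGraph α β) = card α + 1 ↔ card α ^ card α ≤ card β := by
  rw [listChromaticNumber_eq_succ_iff choosable_completeBipartiteGraph_card_add_one]
  exact ⟨fun h ↦ not_lt.1 (mt choosable_completeBipartiteGraph_of_card_lt h),
    not_choosable_completeBipartiteGraph_of_card_le⟩

theorem list_chromatic_completeBipartite_general (a b : ℕ) :
    listChromaticNumber (completeBipartiteGraph (Fin a) (Fin b)) = a + 1 ↔ a ^ a ≤ b := by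
  simpa using
    listChromaticNumber_completeBipartiteGraph_eq_card_add_one_iff (α := Fin a) (β := Fin b)

theorem list_chromatic_completeBipartite (a b : ℕ) (ha : 1 ≤ a) (hb : 1 ≤ b) :
    listChromaticNumber (completeBipartiteGraph (Fin a) (Fin b)) = a + 1 ↔ a ^ a ≤ b :=
  list_chromatic_completeBipartite_general a b
end

section
/- For any graph G and any a, b ∈ ℕ, the list chromatic number of the Cartesian product G □ K_{a,b} is at most χ_ℓ(G) + a. -/
open SimpleGraph

namespace Choosable

variable {V : Type*} {G : SimpleGraph V} {k : ℕ}

theorem exists_isProperListColoring (h : Choosable G k) (L : V → Finset ℕ)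
    (hL : ∀ v, k ≤ (L v).card) : ∃ f, IsProperListColoring G L f := by
  choose L' hL'L hL' using fun v => Finset.exists_subset_card_eq (hL v)
  obtain ⟨f, hf, hadj⟩ := h L' hL'
  exact ⟨f, fun v => hL'L v (hf v), hadj⟩

theorem of_isEmpty [IsEmpty V] (G : SimpleGraph V) (k : ℕ) : Choosable G k :=
  fun _ _ => ⟨fun _ => 0, isEmptyElim, fun v => isEmptyElim v⟩

theorem of_boxProd {W : Type*} {H : SimpleGraph W} [Nonempty W] (h : Choosable (G □ H) k) :
    Choosable G k := by
  intro L hL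
  let w : W := Classical.arbitrary W
  obtain ⟨f, hf, hadj⟩ := h (fun p => L p.1) (fun p => hL p.1)
  exact ⟨fun v => f (v, w), fun v => hf (v, w), fun _ _ huv => hadj (boxProd_adj_left.2 huv)⟩

/-- Colour the copies `G × {x}`, `x ∈ α`, first; each vertex `(u, y)` of a copy on the other
side then loses at most `|α|` colours of its list, namely those used at the `(u, x)`. -/
theorem boxProd_completeBipartiteGraph {α β : Type*} [Fintype α] (h : Choosable G k) :
    Choosable (G □ completeBipartiteGraph α β) (k + Fintype.card α) := by
  classical
  intro L hL
  choose F hF using fun x : α =>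
    h.exists_isProperListColoring (fun u => L (u, .inl x)) (fun u => by simp [hL])
  let used (u : V) : Finset ℕ := Finset.univ.image (F · u)
  have hcard (u : V) (y : β) : k ≤ (L (u, .inr y) \ used u).card :=
    calc k = (L (u, .inr y)).card - Fintype.card α := by rw [hL]; omega
      _ ≤ (L (u, .inr y)).card - (used u).card := Nat.sub_le_sub_left Finset.card_image_le _
      _ ≤ (L (u, .inr y) \ used u).card := Finset.le_card_sdiff _ _
  choose g hg using fun y : β => h.exists_isProperListColoring _ (hcard · y)
  have hfresh (u : V) (x : α) (y : β) : g y u ≠ F x u := fun hxy =>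
    (Finset.mem_sdiff.1 ((hg y).1 u)).2 (hxy ▸ Finset.mem_image_of_mem _ (Finset.mem_univ x))
  refine ⟨fun p => p.2.elim (F · p.1) (g · p.1), ?_, ?_⟩
  · rintro ⟨u, x | y⟩
    exacts [(hF x).1 u, (Finset.mem_sdiff.1 ((hg y).1 u)).1]
  · rintro ⟨u, p⟩ ⟨u', p'⟩ hadj
    rcases boxProd_adj.1 hadj with ⟨hG, rfl : p = p'⟩ | ⟨hK, rfl : u = u'⟩
    · rcases p with x | y
      exacts [(hF x).2 hG, (hg y).2 hG]
    · rcases p with x | y <;> rcases p' with x' | y' <;> simp at hK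
      exacts [(hfresh u x y').symm, hfresh u x' y]

end Choosable

theorem listChromaticNumber_boxProd_eq_zero {V W : Type*} {G : SimpleGraph V}
    (H : SimpleGraph W) (hG : ∀ k, ¬Choosable G k) : listChromaticNumber (G □ H) = 0 := by
  rcases isEmpty_or_nonempty W with hW | hW
  · exact Nat.sInf_eq_zero.2 (.inl (Choosable.of_isEmpty _ 0))
  · exact Nat.sInf_eq_zero.2 (.inr (Set.eq_empty_of_forall_notMem fun k hk => hG k hk.of_boxProd))

theorem listChromatic_boxProd_completeBipartite_le_general {V : Type*}
    (G : SimpleGraph V) (a b : ℕ) :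
    listChromaticNumber (G □ completeBipartiteGraph (Fin a) (Fin b)) ≤
      listChromaticNumber G + a := by
  by_cases hG : ∃ k, Choosable G k
  · have hχ : Choosable G (listChromaticNumber G) := Nat.sInf_mem hG
    apply Nat.sInf_le
    simpa using hχ.boxProd_completeBipartiteGraph (α := Fin a) (β := Fin b)
  · rw [listChromaticNumber_boxProd_eq_zero _ (not_exists.1 hG)]
    exact Nat.zero_le _

theorem listChromatic_boxProd_completeBipartite_le {V : Type*} [Fintype V]
    (G : SimpleGraph V) (a b : ℕ) (ha : 1 ≤ a) (hb : 1 ≤ b) :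
    listChromaticNumber (G □ completeBipartiteGraph (Fin a) (Fin b)) ≤
      listChromaticNumber G + a :=
  listChromatic_boxProd_completeBipartite_le_general G a b
end

section
/- For the even cycle C_{2n} (n ≥ 2), the least b such that χ_ℓ(C_{2n} □ K_{1,b}) = χ_ℓ(C_{2n}) + 1 equals 1; in particular f_1(C_{2n}) = 1 while P_ℓ(C_{2n}, 2) = 2. -/
open SimpleGraph

/-!
An even cycle is `2`-choosable: constant lists are colored alternately, and otherwise some color
`c ∈ L (j + 1)` is missing from `L j`, so coloring greedily around the cycle from `c` at `j + 1`
closes up. A coloring `f` from lists of size at least two is never unique: pick `o i ∈ L i` with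
`o i ≠ f i`. Either `o` is proper, or `o j = o (j + 1)` for some `j`, and recoloring by `o` from
`j + 1` onwards for as long as the switch is forced (or backwards from `j`) gives a new coloring;
the switch cannot be forced all the way round in both directions. The constant lists `{0, 1}`
admit only the two alternating colorings, hence `P_ℓ(C_{2n}, 2) = 2`.

For `C_{2n} □ K_{1,1}` one colors the two copies of the cycle one after the other from lists of
size `3`, and an explicit `2`-assignment on a path of four vertices admits no coloring. The graph
`C_{2n} □ K_{1,0}` is a copy of `C_{2n}`, so `b = 0` does not raise the list chromatic number.
-/

open Finset

section General

variable {V W : Type*} {G : SimpleGraph V} {k : ℕ}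

lemma IsProperListColoring.comp {G' : SimpleGraph W} {L : W → Finset ℕ} {f : W → ℕ}
    (φ : G →g G') (hf : IsProperListColoring G' L f) :
    IsProperListColoring G (L ∘ φ) (f ∘ φ) :=
  ⟨fun v => hf.1 (φ v), fun _ _ hvw => hf.2 (φ.map_adj hvw)⟩

lemma IsProperListColoring.of_comp_iso {G' : SimpleGraph W} {L : W → Finset ℕ} {g : V → ℕ}
    (e : G ≃g G') (hg : IsProperListColoring G (L ∘ e) g) :
    IsProperListColoring G' L (g ∘ e.symm) :=
  ⟨fun w => by simpa using hg.1 (e.symm w), fun _ _ hvw => hg.2 (e.symm.map_adj_iff.mpr hvw)⟩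

lemma exists_ne_isProperListColoring_of_comp_iso {G' : SimpleGraph W} {L : W → Finset ℕ}
    {f : W → ℕ} (e : G ≃g G')
    (h : ∃ g, IsProperListColoring G (L ∘ e) g ∧ g ≠ f ∘ e) :
    ∃ g, IsProperListColoring G' L g ∧ g ≠ f := by
  obtain ⟨g, hg, hne⟩ := h
  refine ⟨g ∘ e.symm, hg.of_comp_iso e, fun h => hne (funext fun v => ?_)⟩
  simpa using congrFun h (e v)

instance finite_properListColorings [Finite V] (L : V → Finset ℕ) :
    Finite {f : V → ℕ // IsProperListColoring G L f} :=
  Finite.of_injective (fun f v => (⟨f.1 v, f.2.1 v⟩ : L v)) fun _ _ h =>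
    Subtype.ext (funext fun v => congrArg Subtype.val (congrFun h v))

lemma Choosable.exists_isProperListColoring_s7 (h : Choosable G k) {L : V → Finset ℕ}
    (hL : ∀ v, k ≤ (L v).card) : ∃ f, IsProperListColoring G L f := by
  choose L' hL'L hL' using fun v => exists_subset_card_eq (hL v)
  obtain ⟨f, hf⟩ := h L' hL'
  exact ⟨f, fun v => hL'L v (hf.1 v), hf.2⟩

lemma Choosable.mono_s7 {l : ℕ} (h : Choosable G k) (hkl : k ≤ l) : Choosable G l :=
  fun _ hL => h.exists_isProperListColoring_s7 fun v => (hL v).symm ▸ hkl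

lemma listChromaticNumber_le (h : Choosable G k) : listChromaticNumber G ≤ k :=
  Nat.sInf_le h

lemma listChromaticNumber_eq_succ (h : Choosable G (k + 1)) (h' : ¬ Choosable G k) :
    listChromaticNumber G = k + 1 :=
  le_antisymm (listChromaticNumber_le h) <| le_csInf ⟨_, h⟩ fun _ hj =>
    Nat.succ_le_of_lt <| lt_of_not_ge fun hjk => h' (Choosable.mono_s7 hj hjk)

lemma not_choosable_one_of_adj {v w : V} (hvw : G.Adj v w) : ¬ Choosable G 1 := by
  intro h
  obtain ⟨f, hf⟩ := h (fun _ => {0}) fun _ => rfl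
  exact hf.2 hvw (by rw [mem_singleton.mp (hf.1 v), mem_singleton.mp (hf.1 w)])

lemma Choosable.boxProd_bot (h : Choosable G k) : Choosable (G □ (⊥ : SimpleGraph W)) k := by
  intro L hL
  choose f hf using fun x => h (fun v => L (v, x)) fun v => hL _
  refine ⟨fun p => f p.2 p.1, fun p => (hf p.2).1 p.1, ?_⟩
  rintro ⟨v, x⟩ ⟨w, y⟩ hadj
  rcases boxProd_adj.mp hadj with ⟨hvw, rfl : x = y⟩ | ⟨hxy, -⟩
  · exact (hf x).2 hvw
  · exact (bot_adj x y).mp hxy |>.elim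

lemma Choosable.boxProd_star (h : Choosable G k) (b : ℕ) :
    Choosable (G □ completeBipartiteGraph (Fin 1) (Fin b)) (k + 1) := by
  intro L hL
  obtain ⟨c, hc⟩ := h.exists_isProperListColoring_s7 (L := fun v => L (v, .inl 0))
    fun v => by rw [hL]; omega
  choose f hf using fun l : Fin b =>
    h.exists_isProperListColoring_s7 (L := fun v => (L (v, .inr l)).erase (c v))
      fun v => by simpa [hL] using pred_card_le_card_erase (s := L (v, .inr l)) (a := c v)
  refine ⟨fun p => Sum.elim (fun _ => c p.1) (fun l => f l p.1) p.2, ?_, ?_⟩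
  · rintro ⟨v, z | l⟩
    · obtain rfl := Subsingleton.elim z 0
      exact hc.1 v
    · exact mem_of_mem_erase ((hf l).1 v)
  · rintro ⟨v, z | l⟩ ⟨w, z' | l'⟩ hadj <;>
      simp only [boxProd_adj, completeBipartiteGraph_adj, Sum.inl.injEq, Sum.inr.injEq,
        reduceCtorEq, Sum.isLeft_inl, Sum.isLeft_inr, Sum.isRight_inl, Sum.isRight_inr,
        Bool.false_eq_true, and_self, and_true, and_false, true_and, false_and, or_self, or_true,
        or_false, false_or] at hadj
    · exact hc.2 hadj.1
    · subst hadj; exact (ne_of_mem_erase ((hf l').1 v)).symm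
    · subst hadj; exact ne_of_mem_erase ((hf l).1 v)
    · obtain ⟨hvw, rfl⟩ := hadj; exact (hf l).2 hvw

/-- The lists `{0, 1}` on the copy of `G` over `x` force an alternating coloring there; the lists
`{0, 2}, {1, 2}, {1, 2}, {0, 2}` along the path in the copy over `y` then force two adjacent
`2`s. -/
lemma not_choosable_two_boxProd {H : SimpleGraph W} {v₀ v₁ v₂ v₃ : V} (h₀₁ : G.Adj v₀ v₁)
    (h₁₂ : G.Adj v₁ v₂) (h₂₃ : G.Adj v₂ v₃) (h₀₂ : v₀ ≠ v₂) (h₁₃ : v₁ ≠ v₃) {x y : W}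
    (hxy : H.Adj x y) : ¬ Choosable (G □ H) 2 := by
  classical
  intro h
  let L : V × W → Finset ℕ := fun p =>
    if p.2 = y then
      if p.1 = v₁ ∨ p.1 = v₂ then {1, 2} else if p.1 = v₀ ∨ p.1 = v₃ then {0, 2} else {0, 1}
    else {0, 1}
  obtain ⟨f, hf, hf'⟩ := h L fun p => by dsimp only [L]; split_ifs <;> rfl
  have ha : ∀ v, f (v, x) = 0 ∨ f (v, x) = 1 := fun v => by simpa [L, hxy.ne] using hf (v, x)
  have hb₀ := hf (v₀, y)
  have hb₁ := hf (v₁, y)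
  have hb₂ := hf (v₂, y)
  have hb₃ := hf (v₃, y)
  simp only [L, ↓reduceIte, h₀₁.ne, h₀₂, h₁₂.ne.symm, h₁₃.symm, h₂₃.ne.symm, or_self, true_or,
    or_true, mem_insert, mem_singleton] at hb₀ hb₁ hb₂ hb₃
  have hx {v w} (hvw : G.Adj v w) := hf' ((boxProd_adj_left (b := x)).mpr hvw)
  have hy {v w} (hvw : G.Adj v w) := hf' ((boxProd_adj_left (b := y)).mpr hvw)
  have hxy' (v) := hf' ((boxProd_adj_right (a := v)).mpr hxy)
  have := hx h₀₁; have := hx h₁₂; have := hx h₂₃; have := hy h₀₁; have := hy h₂₃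
  have := ha v₀; have := ha v₁; have := ha v₂; have := ha v₃
  have := hxy' v₀; have := hxy' v₁; have := hxy' v₂; have := hxy' v₃
  omega

end General

section Cycle

variable {W : Type*} {n : ℕ}

lemma cycleGraph_adj_add_one (i : Fin (n + 2)) : (cycleGraph (n + 2)).Adj i (i + 1) :=
  cycleGraph_adj.mpr (Or.inr (add_sub_cancel_left i 1))

lemma cycleGraph_adj_castSucc_succ (j : Fin (n + 1)) :
    (cycleGraph (n + 2)).Adj j.castSucc j.succ :=
  Fin.coeSucc_eq_succ ▸ cycleGraph_adj_add_one j.castSucc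

lemma Fin.forall_ne_add_one_iff {α : Type*} {f : Fin (n + 2) → α} :
    (∀ i, f i ≠ f (i + 1)) ↔
      f (Fin.last (n + 1)) ≠ f 0 ∧ ∀ j : Fin (n + 1), f j.castSucc ≠ f j.succ := by
  refine ⟨fun h => ⟨Fin.last_add_one (n + 1) ▸ h _, fun j => Fin.coeSucc_eq_succ ▸ h _⟩, ?_⟩
  rintro ⟨hlast, hsucc⟩ i
  rcases Fin.eq_castSucc_or_eq_last i with ⟨j, rfl⟩ | rfl
  · exact Fin.coeSucc_eq_succ ▸ hsucc j
  · exact (Fin.last_add_one (n + 1)).symm ▸ hlast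

lemma isProperListColoring_cycleGraph_iff {L : Fin (n + 2) → Finset ℕ} {f : Fin (n + 2) → ℕ} :
    IsProperListColoring (cycleGraph (n + 2)) L f ↔ (∀ i, f i ∈ L i) ∧ ∀ i, f i ≠ f (i + 1) := by
  refine and_congr_right fun _ => ⟨fun h i => h (cycleGraph_adj_add_one i), fun h u v huv => ?_⟩
  rcases cycleGraph_adj.mp huv with huv | huv
  · rw [sub_eq_iff_eq_add'.mp huv]
    exact (h v).symm
  · rw [sub_eq_iff_eq_add'.mp huv]
    exact h u

def cycleGraphRotation (r : Fin (n + 2)) : cycleGraph (n + 2) ≃g cycleGraph (n + 2) where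
  toEquiv := Equiv.addRight r
  map_rel_iff' := by simp [cycleGraph_adj]

def cycleGraphReflection : cycleGraph (n + 2) ≃g cycleGraph (n + 2) where
  toEquiv := Fin.revPerm
  map_rel_iff' := by simp [cycleGraph_adj, ← Fin.last_sub, or_comm]

@[simp]
lemma cycleGraphRotation_apply (r i : Fin (n + 2)) : cycleGraphRotation r i = i + r := rfl

@[simp]
lemma cycleGraphReflection_apply (i : Fin (n + 2)) : cycleGraphReflection i = i.rev := rfl

lemma Fin.last_add_add_one (j : Fin (n + 2)) : Fin.last (n + 1) + (j + 1) = j := by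
  rw [add_left_comm, Fin.last_add_one, add_zero]

lemma exists_isProperListColoring_cycleGraph_of_not_mem {L : Fin (n + 2) → Finset ℕ}
    (hL : ∀ i, 2 ≤ (L i).card) {c : ℕ} (hc₀ : c ∈ L 0) (hc : c ∉ L (Fin.last (n + 1))) :
    ∃ f, IsProperListColoring (cycleGraph (n + 2)) L f := by
  choose next hnext hnext_ne using fun i => exists_mem_ne (hL i)
  let f : Fin (n + 2) → ℕ := Fin.induction c fun j x => next j.succ x
  have hf_succ (j : Fin (n + 1)) : f j.succ = next j.succ (f j.castSucc) := Fin.induction_succ ..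
  have hf_mem (i : Fin (n + 2)) : f i ∈ L i := by
    cases i using Fin.cases with
    | zero => exact hc₀
    | succ j => exact hf_succ j ▸ hnext _ _
  refine ⟨f, isProperListColoring_cycleGraph_iff.mpr
    ⟨hf_mem, Fin.forall_ne_add_one_iff.mpr ⟨?_, ?_⟩⟩⟩
  · exact fun h => hc (h.trans (Fin.induction_zero ..) ▸ hf_mem _)
  · exact fun j => (hf_succ j ▸ hnext_ne _ _).symm

lemma isProperListColoring_cycleGraph_alternating (hn : Even n) {s : Finset ℕ} {x y : ℕ}
    (hx : x ∈ s) (hy : y ∈ s) (hxy : x ≠ y) :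
    IsProperListColoring (cycleGraph (n + 2)) (fun _ => s)
      (fun i => if Even i.val then x else y) := by
  refine isProperListColoring_cycleGraph_iff.mpr ⟨fun i => by split_ifs <;> assumption,
    Fin.forall_ne_add_one_iff.mpr ⟨?_, fun j => ?_⟩⟩
  · simp [Nat.even_add_one, hn, hxy.symm]
  · simp only [Fin.val_castSucc, Fin.val_succ, Nat.even_add_one]
    split_ifs
    exacts [hxy, hxy.symm]

lemma choosable_two_cycleGraph (hn : Even n) : Choosable (cycleGraph (n + 2)) 2 := by
  intro L hL
  by_cases hconst : ∀ i, L (i + 1) = L i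
  · have hL₀ : ∀ i, L i = L 0 := by
      intro i
      induction i using Fin.induction with
      | zero => rfl
      | succ j ih => rw [← Fin.coeSucc_eq_succ, hconst, ih]
    obtain ⟨x, y, hxy, hs⟩ := card_eq_two.mp (hL 0)
    rw [show L = fun _ => L 0 from funext hL₀]
    exact ⟨_, isProperListColoring_cycleGraph_alternating hn
      (hs ▸ mem_insert_self x {y}) (hs ▸ mem_insert_of_mem (mem_singleton_self y)) hxy⟩
  obtain ⟨j, hj⟩ := not_forall.mp hconst
  obtain ⟨c, hc₁, hc₀⟩ : ∃ c ∈ L (j + 1), c ∉ L j := by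
    by_contra! h
    exact hj (eq_of_subset_of_card_le h (by rw [hL, hL]))
  let e := cycleGraphRotation (j + 1)
  obtain ⟨f, hf⟩ := exists_isProperListColoring_cycleGraph_of_not_mem (L := L ∘ e)
    (fun i => (hL _).ge) (c := c) (by simpa [e]) (by simpa [e, Fin.last_add_add_one])
  exact ⟨_, hf.of_comp_iso e⟩

/-- Recolor `f` by `o` on `0, …, t`, where `t` is the first vertex after which the switch to `o`
is no longer forced. -/
lemma exists_ne_of_switch_initial_segment {L : Fin (n + 2) → Finset ℕ} {f o : Fin (n + 2) → ℕ}
    (hf : IsProperListColoring (cycleGraph (n + 2)) L f) (ho : ∀ i, o i ∈ L i)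
    (hof : ∀ i, o i ≠ f i) (hlast : o (Fin.last (n + 1)) = o 0)
    (h : ∃ t : Fin (n + 1), o t.castSucc ≠ f t.succ) :
    ∃ g, IsProperListColoring (cycleGraph (n + 2)) L g ∧ g ≠ f := by
  obtain ⟨t, ht, hmin⟩ := wellFounded_lt.has_min {t : Fin (n + 1) | o t.castSucc ≠ f t.succ} h
  have hforced (j : Fin (n + 1)) (hj : j < t) : o j.castSucc = f j.succ := by
    by_contra hne; exact hmin j hne hj
  let g i := if i ≤ t.castSucc then o i else f i
  refine ⟨g, isProperListColoring_cycleGraph_iff.mpr ⟨fun i => ?_,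
    Fin.forall_ne_add_one_iff.mpr ⟨?_, fun j => ?_⟩⟩, fun hg => ?_⟩
  · dsimp only [g]; split_ifs; exacts [ho i, hf.1 i]
  · simp only [g, Fin.zero_le, if_true, if_neg (Fin.castSucc_lt_last t).not_ge, ← hlast]
    exact (hof _).symm
  · rcases lt_trichotomy j t with hjt | rfl | htj
    · simp only [g, Fin.castSucc_le_castSucc_iff, Fin.succ_le_castSucc_iff, hjt, hjt.le, if_true,
        hforced j hjt]
      exact (hof _).symm
    · simpa [g] using ht
    · simp only [g, Fin.castSucc_le_castSucc_iff, Fin.succ_le_castSucc_iff, htj.not_ge,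
        htj.not_gt, if_false]
      exact hf.2 (cycleGraph_adj_castSucc_succ j)
  · exact hof 0 (by simpa [g] using congrFun hg 0)

lemma false_of_forced_both_ways {f o : Fin (n + 2) → ℕ} (hf : f (Fin.last (n + 1)) ≠ f 0)
    (hof : o 0 ≠ f 0) (hlast : o (Fin.last (n + 1)) = o 0)
    (hfw : ∀ t : Fin (n + 1), o t.castSucc = f t.succ)
    (hbw : ∀ t : Fin (n + 1), f t.castSucc = o t.succ) : False := by
  have key (i : Fin (n + 2)) : (f i = f 0 ∧ o i = o 0) ∨ (f i = o 0 ∧ o i = f 0) := by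
    induction i using Fin.induction with
    | zero => exact .inl ⟨rfl, rfl⟩
    | succ t ih => rw [← hfw t, ← hbw t]; tauto
  rcases key (Fin.last _) with ⟨h, -⟩ | ⟨-, h⟩
  · exact hf h
  · exact hof (hlast ▸ h)

lemma exists_ne_of_eq_last_zero {L : Fin (n + 2) → Finset ℕ} {f o : Fin (n + 2) → ℕ}
    (hf : IsProperListColoring (cycleGraph (n + 2)) L f) (ho : ∀ i, o i ∈ L i)
    (hof : ∀ i, o i ≠ f i) (hlast : o (Fin.last (n + 1)) = o 0) :
    ∃ g, IsProperListColoring (cycleGraph (n + 2)) L g ∧ g ≠ f := by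
  by_cases hfw : ∃ t : Fin (n + 1), o t.castSucc ≠ f t.succ
  · exact exists_ne_of_switch_initial_segment hf ho hof hlast hfw
  by_cases hbw : ∃ t : Fin (n + 1), f t.castSucc ≠ o t.succ
  · -- the switch is not forced backwards somewhere: run the forward argument on the mirror image
    let e := cycleGraphReflection (n := n)
    apply exists_ne_isProperListColoring_of_comp_iso e
    obtain ⟨t, ht⟩ := hbw
    refine exists_ne_of_switch_initial_segment (hf.comp e.toHom) (fun i => ho _) (fun i => hof _)
      (by simpa [e] using hlast.symm) ⟨t.rev, ?_⟩
    simpa [e, Fin.rev_castSucc, Fin.rev_succ] using ht.symm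
  simp only [not_exists, not_not] at hfw hbw
  have hf_last : f (Fin.last (n + 1)) ≠ f 0 := by
    simpa using hf.2 (cycleGraph_adj_add_one (Fin.last (n + 1)))
  exact (false_of_forced_both_ways hf_last (hof 0) hlast hfw hbw).elim

lemma exists_ne_isProperListColoring_cycleGraph {L : Fin (n + 2) → Finset ℕ}
    (hL : ∀ i, 2 ≤ (L i).card) {f : Fin (n + 2) → ℕ}
    (hf : IsProperListColoring (cycleGraph (n + 2)) L f) :
    ∃ g, IsProperListColoring (cycleGraph (n + 2)) L g ∧ g ≠ f := by
  choose o ho hof using fun i => exists_mem_ne (hL i) (f i)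
  by_cases ho_proper : IsProperListColoring (cycleGraph (n + 2)) L o
  · exact ⟨o, ho_proper, fun h => hof 0 (congrFun h 0)⟩
  obtain ⟨j, hj⟩ : ∃ j, o j = o (j + 1) := by
    simpa [isProperListColoring_cycleGraph_iff, ho] using ho_proper
  let e := cycleGraphRotation (j + 1)
  exact exists_ne_isProperListColoring_of_comp_iso e <|
    exists_ne_of_eq_last_zero (o := o ∘ e) (hf.comp e.toHom) (fun i => ho _) (fun i => hof _)
      (by simpa [e, Fin.last_add_add_one] using hj)

lemma two_le_card_properListColorings_cycleGraph (hn : Even n) {L : Fin (n + 2) → Finset ℕ}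
    (hL : ∀ i, (L i).card = 2) :
    2 ≤ Nat.card {f // IsProperListColoring (cycleGraph (n + 2)) L f} := by
  obtain ⟨f, hf⟩ := choosable_two_cycleGraph hn L hL
  obtain ⟨g, hg, hgf⟩ := exists_ne_isProperListColoring_cycleGraph (fun i => (hL i).ge) hf
  exact Finite.one_lt_card_iff_nontrivial.mpr
    ⟨⟨g, hg⟩, ⟨f, hf⟩, fun h => hgf (congrArg Subtype.val h)⟩

lemma card_properListColorings_cycleGraph_const_le {s : Finset ℕ} (hs : s.card = 2) :
    Nat.card {f // IsProperListColoring (cycleGraph (n + 2)) (fun _ => s) f} ≤ 2 := by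
  obtain ⟨x, y, -, rfl⟩ := card_eq_two.mp hs
  refine (Nat.card_le_card_of_injective (fun f => (⟨f.1 0, f.2.1 0⟩ : ({x, y} : Finset ℕ)))
    fun ⟨f, hf⟩ ⟨g, hg⟩ h => Subtype.ext (funext fun i => ?_)).trans
      (Nat.card_eq_finsetCard _ ▸ hs.le)
  induction i using Fin.induction with
  | zero => exact congrArg Subtype.val h
  | succ j ih =>
    have hfj := hf.2 (cycleGraph_adj_castSucc_succ j)
    have hgj := hg.2 (cycleGraph_adj_castSucc_succ j)
    have := hf.1 j.castSucc; have := hf.1 j.succ; have := hg.1 j.succ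
    simp only [mem_insert, mem_singleton] at *
    omega

lemma listColorFunction_cycleGraph_two (hn : Even n) :
    listColorFunction (cycleGraph (n + 2)) 2 = 2 := by
  have hs : ({0, 1} : Finset ℕ).card = 2 := rfl
  unfold listColorFunction
  refine le_antisymm ?_ (le_csInf ⟨_, _, fun _ => hs, rfl⟩ ?_)
  · exact le_trans (Nat.sInf_le ⟨_, fun _ => hs, rfl⟩)
      (card_properListColorings_cycleGraph_const_le hs)
  · rintro _ ⟨L, hL, rfl⟩
    exact two_le_card_properListColorings_cycleGraph hn hL

lemma not_choosable_two_cycleGraph_boxProd (hn : 2 ≤ n) {H : SimpleGraph W} {x y : W}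
    (hxy : H.Adj x y) : ¬ Choosable (cycleGraph (n + 2) □ H) 2 :=
  not_choosable_two_boxProd (v₀ := ⟨0, by omega⟩) (v₁ := ⟨1, by omega⟩) (v₂ := ⟨2, by omega⟩)
    (v₃ := ⟨3, by omega⟩) (cycleGraph_adj_castSucc_succ ⟨0, by omega⟩)
    (cycleGraph_adj_castSucc_succ ⟨1, by omega⟩) (cycleGraph_adj_castSucc_succ ⟨2, by omega⟩)
    (by simp) (by simp) hxy

end Cycle

theorem evenCycle_f_one_eq_one (n : ℕ) (hn : 2 ≤ n) :
    IsLeast {b : ℕ | listChromaticNumber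
        (cycleGraph (2 * n) □ completeBipartiteGraph (Fin 1) (Fin b)) =
        listChromaticNumber (cycleGraph (2 * n)) + 1} 1 ∧
    listColorFunction (cycleGraph (2 * n)) 2 = 2 := by
  obtain ⟨m, hm, hm2, h2n⟩ : ∃ m, Even m ∧ 2 ≤ m ∧ 2 * n = m + 2 :=
    ⟨2 * n - 2, ⟨n - 1, by omega⟩, by omega, by omega⟩
  rw [h2n]
  have hC₂ := choosable_two_cycleGraph hm
  have hC : listChromaticNumber (cycleGraph (m + 2)) = 2 :=
    listChromaticNumber_eq_succ hC₂ (not_choosable_one_of_adj (cycleGraph_adj_add_one 0))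
  refine ⟨⟨?_, fun b hb => ?_⟩, listColorFunction_cycleGraph_two hm⟩
  · rw [Set.mem_ofPred_eq, hC, listChromaticNumber_eq_succ (hC₂.boxProd_star 1)
      (not_choosable_two_cycleGraph_boxProd hm2 (x := .inl 0) (y := .inr 0) (by simp))]
  · by_contra! hb₀
    obtain rfl : b = 0 := by omega
    have hbot : completeBipartiteGraph (Fin 1) (Fin 0) = ⊥ := by
      ext (x | ⟨_, ⟨⟩⟩) (y | ⟨_, ⟨⟩⟩); simp
    have := listChromaticNumber_le (hbot ▸ hC₂.boxProd_bot)
    rw [Set.mem_ofPred_eq, hC] at hb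
    omega
end

section
/- Let M be a strong k-chromatic-choosable graph with k ≥ a+1 and H = M □ K_{a,1}. Suppose L is a (k+a−1)-assignment for H such that for each i, the lists L(v_i, u_1), …, L(v_i, u_a) are pairwise disjoint. Then there is at most one proper L-coloring of the subgraph induced by the copies of M corresponding to u_1, …, u_a that is bad for the copy of M corresponding to w_1. -/
open SimpleGraph

/-- `f`, a coloring of the copies of `M` corresponding to the vertices `u_1, …, u_a`
of the size-`a` partite set, is *bad* for the copy of `M` corresponding to `w_l`. -/
def BadColoring {V : Type*} (G : SimpleGraph V) (a b : ℕ)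
    (L : V × (Fin a ⊕ Fin b) → Finset ℕ)
    (f : {p : V × (Fin a ⊕ Fin b) // ∃ j, p.2 = Sum.inl j} → ℕ) (l : Fin b) : Prop :=
  ¬ ∃ g : V → ℕ,
    (∀ v, g v ∈ L (v, Sum.inr l) ∧ ∀ j : Fin a, g v ≠ f ⟨(v, Sum.inl j), ⟨j, rfl⟩⟩) ∧
    ∀ ⦃v w⦄, G.Adj v w → g v ≠ g w

private lemma not_colorable_aux {V : Type*} (M : SimpleGraph V) {k a : ℕ}
    (h : StrongChromChoosable M k) (hk : a + 1 ≤ k) : ¬ M.Colorable a := by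
  intro hc
  have h1 := hc.chromaticNumber_le
  rw [h.1] at h1
  exact absurd (Nat.cast_le.mp h1) (by omega)

private lemma colorable_of_common {V : Type*} (M : SimpleGraph V) {a : ℕ}
    (g : {p : V × (Fin a ⊕ Fin 1) // ∃ j, p.2 = Sum.inl j} → ℕ)
    (hg2 : ∀ ⦃p q⦄, ((M □ completeBipartiteGraph (Fin a) (Fin 1)).induce
        {p | ∃ j, p.2 = Sum.inl j}).Adj p q → g p ≠ g q)
    (c : ℕ) (hc : ∀ v : V, ∃ j : Fin a, g ⟨(v, Sum.inl j), ⟨j, rfl⟩⟩ = c) :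
    M.Colorable a := by
  set gg : V → Fin a → ℕ := fun v j => g ⟨(v, Sum.inl j), ⟨j, rfl⟩⟩ with hgg
  have key : ∀ v w : V, M.Adj v w → ∀ j : Fin a, gg v j ≠ gg w j := by
    intro v w hvw j
    have hadj : ((M □ completeBipartiteGraph (Fin a) (Fin 1)).induce
        {p | ∃ j, p.2 = Sum.inl j}).Adj
        ⟨(v, Sum.inl j), ⟨j, rfl⟩⟩ ⟨(w, Sum.inl j), ⟨j, rfl⟩⟩ := by
      simp [boxProd_adj, hvw]
    exact hg2 hadj
  have hc' : ∀ v : V, ∃ j : Fin a, gg v j = c := hc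
  refine ⟨SimpleGraph.Coloring.mk (fun v => (hc' v).choose) ?_⟩
  intro v w hvw heq
  have heq' : (hc' v).choose = (hc' w).choose := heq
  refine key v w hvw (hc' v).choose ?_
  rw [(hc' v).choose_spec, heq', (hc' w).choose_spec]

private lemma bad_structure {V : Type*} [Fintype V] (M : SimpleGraph V) {k a : ℕ}
    (h : StrongChromChoosable M k) (hk : a + 1 ≤ k) (ha : 1 ≤ a)
    (L : V × (Fin a ⊕ Fin 1) → Finset ℕ) (hL : ∀ p, (L p).card = k + a - 1)
    (hdisj : ∀ (v : V) (x y : Fin a), x ≠ y →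
      Disjoint (L (v, Sum.inl x)) (L (v, Sum.inl y)))
    (f : {p : V × (Fin a ⊕ Fin 1) // ∃ j, p.2 = Sum.inl j} → ℕ)
    (hf1 : ∀ p, f p ∈ L p.val)
    (bf : BadColoring M a 1 L f 0) (v w : V) :
    L (v, Sum.inr 0) \ (Finset.univ.image fun j : Fin a => f ⟨(v, Sum.inl j), ⟨j, rfl⟩⟩)
      = L (w, Sum.inr 0) \ (Finset.univ.image fun j : Fin a => f ⟨(w, Sum.inl j), ⟨j, rfl⟩⟩)
    ∧ (Finset.univ.image fun j : Fin a => f ⟨(v, Sum.inl j), ⟨j, rfl⟩⟩) ⊆ L (v, Sum.inr 0) := by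
  classical
  set Ff : V → Finset ℕ :=
    fun v => Finset.univ.image fun j : Fin a => f ⟨(v, Sum.inl j), ⟨j, rfl⟩⟩ with hFf
  set L' : V → Finset ℕ := fun v => L (v, Sum.inr 0) \ Ff v with hL'
  have cardFf : ∀ v, (Ff v).card = a := by
    intro v
    rw [hFf]
    rw [Finset.card_image_of_injective _ ?_, Finset.card_univ, Fintype.card_fin]
    intro j j' hjj
    by_contra hne
    have hjj' : f ⟨(v, Sum.inl j), ⟨j, rfl⟩⟩ = f ⟨(v, Sum.inl j'), ⟨j', rfl⟩⟩ := hjj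
    have m1 := hf1 ⟨(v, Sum.inl j), ⟨j, rfl⟩⟩
    have m2 := hf1 ⟨(v, Sum.inl j'), ⟨j', rfl⟩⟩
    rw [hjj'] at m1
    exact Finset.disjoint_left.mp (hdisj v j j' hne) m1 m2
  have cardL' : ∀ v, k - 1 ≤ (L' v).card := by
    intro v
    have h1 := Finset.le_card_sdiff (Ff v) (L (v, Sum.inr 0))
    have h2 := hL (v, Sum.inr 0)
    have h3 := cardFf v
    simp only [hL']
    omega
  have hnocol : ∀ S : V → Finset ℕ, (∀ v, S v ⊆ L' v) → ¬ ∃ c, IsProperListColoring M S c := by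
    rintro S hS ⟨c, hc1, hc2⟩
    apply bf
    refine ⟨c, fun v => ?_, hc2⟩
    have hm := hS v (hc1 v)
    simp only [hL', hFf, Finset.mem_sdiff, Finset.mem_image, Finset.mem_univ, true_and] at hm
    exact ⟨hm.1, fun j e => hm.2 ⟨j, e.symm⟩⟩
  have hconst : ∀ S : V → Finset ℕ, (∀ v, S v ⊆ L' v) → (∀ v, (S v).card = k - 1) →
      ∀ v w, S v = S w := fun S hS hcard => h.2 S hcard (hnocol S hS)
  have hV2 : ∀ v₀ : V, ∃ w, w ≠ v₀ := by
    intro v₀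
    by_contra hno
    push_neg at hno
    refine not_colorable_aux M h hk ⟨SimpleGraph.Coloring.mk (fun _ => ⟨0, ha⟩) ?_⟩
    intro x y hxy
    exfalso
    rw [hno x, hno y] at hxy
    exact hxy.ne rfl
  have hcardeq : ∀ v, (L' v).card = k - 1 := by
    intro v₀
    by_contra hgt
    have hge : k ≤ (L' v₀).card := by have := cardL' v₀; omega
    obtain ⟨w₀, hw₀⟩ := hV2 v₀
    choose S hS1 hS2 using fun v => Finset.exists_subset_card_eq (cardL' v)
    obtain ⟨T, hT, hTc⟩ := Finset.exists_subset_card_eq hge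
    obtain ⟨x, hx, y, hy, hxy⟩ := Finset.one_lt_card.mp (by omega : 1 < T.card)
    have cardE : ∀ z ∈ T, (T.erase z).card = k - 1 := by
      intro z hz
      rw [Finset.card_erase_of_mem hz, hTc]
    have subE : ∀ z, T.erase z ⊆ L' v₀ := fun z => (Finset.erase_subset _ _).trans hT
    have sub1 : ∀ v, Function.update S v₀ (T.erase x) v ⊆ L' v := by
      intro v
      rcases eq_or_ne v v₀ with rfl | hv
      · rw [Function.update_self]; exact subE x
      · rw [Function.update_of_ne hv]; exact hS1 v
    have sub2 : ∀ v, Function.update S v₀ (T.erase y) v ⊆ L' v := by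
      intro v
      rcases eq_or_ne v v₀ with rfl | hv
      · rw [Function.update_self]; exact subE y
      · rw [Function.update_of_ne hv]; exact hS1 v
    have card1 : ∀ v, (Function.update S v₀ (T.erase x) v).card = k - 1 := by
      intro v
      rcases eq_or_ne v v₀ with rfl | hv
      · rw [Function.update_self]; exact cardE x hx
      · rw [Function.update_of_ne hv]; exact hS2 v
    have card2 : ∀ v, (Function.update S v₀ (T.erase y) v).card = k - 1 := by
      intro v
      rcases eq_or_ne v v₀ with rfl | hv
      · rw [Function.update_self]; exact cardE y hy
      · rw [Function.update_of_ne hv]; exact hS2 v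
    have e1 := hconst _ sub1 card1 v₀ w₀
    have e2 := hconst _ sub2 card2 v₀ w₀
    rw [Function.update_self, Function.update_of_ne hw₀] at e1 e2
    have exy : T.erase x = T.erase y := e1.trans e2.symm
    have hyx : y ∈ T.erase x := Finset.mem_erase.mpr ⟨Ne.symm hxy, hy⟩
    rw [exy] at hyx
    exact Finset.notMem_erase y T hyx
  have hLconst : ∀ v w, L' v = L' w := hconst L' (fun _ => subset_rfl) hcardeq
  have hsub : ∀ v, Ff v ⊆ L (v, Sum.inr 0) := by
    intro v
    have h1 := hcardeq v
    have h2 := Finset.card_sdiff_add_card_inter (L (v, Sum.inr 0)) (Ff v)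
    have h3 := hL (v, Sum.inr 0)
    have h4 := cardFf v
    have h5 : (L (v, Sum.inr 0) ∩ Ff v).card = a := by
      simp only [hL'] at h1
      omega
    have h6 : L (v, Sum.inr 0) ∩ Ff v = Ff v :=
      Finset.eq_of_subset_of_card_le Finset.inter_subset_right (by omega)
    rw [← h6]
    exact Finset.inter_subset_left
  exact ⟨hLconst v w, hsub v⟩

theorem at_most_one_bad_coloring {V : Type*} [Fintype V]
    (M : SimpleGraph V) (k a : ℕ) (h : StrongChromChoosable M k) (hk : a + 1 ≤ k)
    (L : V × (Fin a ⊕ Fin 1) → Finset ℕ) (hL : ∀ p, (L p).card = k + a - 1)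
    (hdisj : ∀ (v : V) (x y : Fin a), x ≠ y →
      Disjoint (L (v, Sum.inl x)) (L (v, Sum.inl y))) :
    ∀ f g, IsProperListColoring
        ((M □ completeBipartiteGraph (Fin a) (Fin 1)).induce
          {p | ∃ j, p.2 = Sum.inl j}) (fun p => L p.val) f →
      IsProperListColoring
        ((M □ completeBipartiteGraph (Fin a) (Fin 1)).induce
          {p | ∃ j, p.2 = Sum.inl j}) (fun p => L p.val) g →
      BadColoring M a 1 L f 0 → BadColoring M a 1 L g 0 → f = g := by
  intro f g hf hg bf bg
  rcases Nat.eq_zero_or_pos a with rfl | ha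
  · funext p
    obtain ⟨⟨v, s⟩, j, hj⟩ := p
    exact j.elim0
  rcases isEmpty_or_nonempty V with hE | hNE
  · funext p
    exact (hE.false p.val.1).elim
  obtain ⟨v₀⟩ := hNE
  set Ff : V → Finset ℕ :=
    fun v => Finset.univ.image fun j : Fin a => f ⟨(v, Sum.inl j), ⟨j, rfl⟩⟩ with hFf
  set Fg : V → Finset ℕ :=
    fun v => Finset.univ.image fun j : Fin a => g ⟨(v, Sum.inl j), ⟨j, rfl⟩⟩ with hFg
  have HF := fun v w => bad_structure M h hk ha L hL hdisj f hf.1 bf v w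
  have HG := fun v w => bad_structure M h hk ha L hL hdisj g hg.1 bg v w
  set A : Finset ℕ := L (v₀, Sum.inr 0) \ Ff v₀ with hA
  set B : Finset ℕ := L (v₀, Sum.inr 0) \ Fg v₀ with hB
  have hAv : ∀ v, L (v, Sum.inr 0) \ Ff v = A := fun v => (HF v v₀).1
  have hBv : ∀ v, L (v, Sum.inr 0) \ Fg v = B := fun v => (HG v v₀).1
  have hFsub : ∀ v, Ff v ⊆ L (v, Sum.inr 0) := fun v => (HF v v₀).2
  have hGsub : ∀ v, Fg v ⊆ L (v, Sum.inr 0) := fun v => (HG v v₀).2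
  have hAB : A = B := by
    apply Finset.Subset.antisymm
    · intro c hc
      by_contra hcB
      refine not_colorable_aux M h hk (colorable_of_common M g hg.2 c fun v => ?_)
      have h1 : c ∈ L (v, Sum.inr 0) := by
        have := hAv v ▸ hc
        exact (Finset.mem_sdiff.mp this).1
      have h2 : c ∈ Fg v := by
        by_contra hc2
        exact hcB (hBv v ▸ Finset.mem_sdiff.mpr ⟨h1, hc2⟩)
      simpa [hFg, Finset.mem_image] using h2
    · intro c hc
      by_contra hcA
      refine not_colorable_aux M h hk (colorable_of_common M f hf.2 c fun v => ?_)
      have h1 : c ∈ L (v, Sum.inr 0) := by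
        have := hBv v ▸ hc
        exact (Finset.mem_sdiff.mp this).1
      have h2 : c ∈ Ff v := by
        by_contra hc2
        exact hcA (hAv v ▸ Finset.mem_sdiff.mpr ⟨h1, hc2⟩)
      simpa [hFf, Finset.mem_image] using h2
  have hFG : ∀ v, Ff v = Fg v := by
    intro v
    have e1 : Ff v = L (v, Sum.inr 0) \ A := by
      rw [← hAv v, Finset.sdiff_sdiff_self_left, Finset.inter_eq_right.mpr (hFsub v)]
    have e2 : Fg v = L (v, Sum.inr 0) \ B := by
      rw [← hBv v, Finset.sdiff_sdiff_self_left, Finset.inter_eq_right.mpr (hGsub v)]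
    rw [e1, e2, hAB]
  funext p
  obtain ⟨⟨v, s⟩, hp⟩ := p
  obtain ⟨j, hj⟩ := hp
  cases hj
  show f ⟨(v, Sum.inl j), ⟨j, rfl⟩⟩ = g ⟨(v, Sum.inl j), ⟨j, rfl⟩⟩
  have hmem : f ⟨(v, Sum.inl j), ⟨j, rfl⟩⟩ ∈ Fg v := by
    rw [← hFG v, hFf]
    exact Finset.mem_image.mpr ⟨j, Finset.mem_univ j, rfl⟩
  rw [hFg] at hmem
  obtain ⟨j', _, hj'⟩ := Finset.mem_image.mp hmem
  have hj'j : j' = j := by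
    by_contra hne
    have m1 := hg.1 ⟨(v, Sum.inl j'), ⟨j', rfl⟩⟩
    have m2 := hf.1 ⟨(v, Sum.inl j), ⟨j, rfl⟩⟩
    rw [hj'] at m1
    exact Finset.disjoint_left.mp (hdisj v j' j hne) m1 m2
  rw [← hj', hj'j]
end
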